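/- Let a ∈ ℝ, let I ⊆ ℝ be an interval containing 0, and let y, z : ℝ → ℝ be twice differentiable on I with y''(s) = (1 − 2·y(s)² − 8·z(s)²)·y(s), z''(s) = (4 − 2·y(s)² − 8·z(s)²)·z(s) on I, and y(0) = 0, y'(0) = 2a, z(0) = a, z'(0) = 0. Assume moreover y(s)² + z(s)² < 1 for all s ∈ I, and define x(s) = √(1 − y(s)² − z(s)²). Then x is twice differentiable on I and satisfies x''(s) = −2·(y(s)² + 4·z(s)²)·x(s) for all s ∈ I. -/

import Mathlib

/-!
Put `γ = (x, y, z)` and `ρ = y² + 4z²`. Since `x² = 1 − y² − z²`, differentiating twice gives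
`x x'' = −(x'² + y'² + z'²) − (y y'' + z z'')`. The EGJ equations give
`y y'' + z z'' = ρ (2x² − 1)`, and the first integral `egjFirstIntegral`, which equals
`x² (|γ'|² − ρ)` and vanishes for the EGJ initial data, gives `|γ'|² = ρ`.
Hence `x x'' = −2ρx²`.
-/

theorem Convex.eq_of_forall_hasDerivAt_zero {E : Type*} [NormedAddCommGroup E] [NormedSpace ℝ E]
    {s : Set ℝ} (hs : Convex ℝ s) {f : ℝ → E} (hf : ∀ t ∈ s, HasDerivAt f 0 t) {a b : ℝ}
    (ha : a ∈ s) (hb : b ∈ s) : f b = f a := by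
  have h := hs.norm_image_sub_le_of_norm_hasDerivWithin_le (C := 0)
    (fun t ht => (hf t ht).hasDerivWithinAt) (fun _ _ => by simp) ha hb
  rwa [zero_mul, norm_le_zero_iff, sub_eq_zero] at h

/-- By Lagrange's identity this is `x² (|γ'|² − ρ)` where `x² = 1 − y² − z²`. -/
def egjFirstIntegral (y z y' z' : ℝ → ℝ) (s : ℝ) : ℝ :=
  y' s ^ 2 + z' s ^ 2 - (y s * z' s - z s * y' s) ^ 2
    - (y s ^ 2 + 4 * z s ^ 2) * (1 - y s ^ 2 - z s ^ 2)

theorem hasDerivAt_egjFirstIntegral {y z y' z' y'' z'' : ℝ → ℝ} {s : ℝ}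
    (hy : HasDerivAt y (y' s) s) (hy' : HasDerivAt y' (y'' s) s)
    (hz : HasDerivAt z (z' s) s) (hz' : HasDerivAt z' (z'' s) s)
    (hODEy : y'' s = (1 - 2 * y s ^ 2 - 8 * z s ^ 2) * y s)
    (hODEz : z'' s = (4 - 2 * y s ^ 2 - 8 * z s ^ 2) * z s) :
    HasDerivAt (egjFirstIntegral y z y' z') 0 s := by
  have h := (((hy'.pow 2).add (hz'.pow 2)).sub (((hy.mul hz').sub (hz.mul hy')).pow 2)).sub
    (((hy.pow 2).add ((hz.pow 2).const_mul 4)).mul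
      (((hasDerivAt_const s (1 : ℝ)).sub (hy.pow 2)).sub (hz.pow 2)))
  refine h.congr_deriv ?_
  simp only [Pi.add_apply, Pi.sub_apply, Pi.mul_apply, Pi.pow_apply, hODEy, hODEz]
  ring

theorem egjFirstIntegral_eq_zero_of_initial {y z y' z' : ℝ → ℝ} (a : ℝ)
    (hy0 : y 0 = 0) (hy'0 : y' 0 = 2 * a) (hz0 : z 0 = a) (hz'0 : z' 0 = 0) :
    egjFirstIntegral y z y' z' 0 = 0 := by
  simp only [egjFirstIntegral, hy0, hy'0, hz0, hz'0]
  ring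

theorem hasDerivAt_sqrt_one_sub_sq_sub_sq {y z : ℝ → ℝ} {y' z' s : ℝ}
    (hy : HasDerivAt y y' s) (hz : HasDerivAt z z' s) (hlt : y s ^ 2 + z s ^ 2 < 1) :
    HasDerivAt (fun t => √(1 - y t ^ 2 - z t ^ 2))
      (-(y s * y' + z s * z') / √(1 - y s ^ 2 - z s ^ 2)) s := by
  have hu : 0 < 1 - y s ^ 2 - z s ^ 2 := by linarith
  have hu' : HasDerivAt (fun t => 1 - y t ^ 2 - z t ^ 2) (-(2 * (y s * y' + z s * z'))) s :=
    (((hasDerivAt_const s (1 : ℝ)).sub (hy.pow 2)).sub (hz.pow 2)).congr_deriv (by ring)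
  refine (hu'.sqrt hu.ne').congr_deriv ?_
  field_simp

theorem egj_x_second_deriv_eq {x y z x' y' z' y'' z'' : ℝ} (hx : x ≠ 0)
    (hx2 : x ^ 2 = 1 - y ^ 2 - z ^ 2) (hxx' : x * x' = -(y * y' + z * z'))
    (hODEy : y'' = (1 - 2 * y ^ 2 - 8 * z ^ 2) * y)
    (hODEz : z'' = (4 - 2 * y ^ 2 - 8 * z ^ 2) * z)
    (hK : y' ^ 2 + z' ^ 2 - (y * z' - z * y') ^ 2 - (y ^ 2 + 4 * z ^ 2) * (1 - y ^ 2 - z ^ 2) = 0) :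
    (-(y' * y' + y * y'' + (z' * z' + z * z'')) * x
        - -(y * y' + z * z') * x') / x ^ 2
      = -2 * (y ^ 2 + 4 * z ^ 2) * x := by
  have hspeed : x' ^ 2 + y' ^ 2 + z' ^ 2 = y ^ 2 + 4 * z ^ 2 := by
    have : x ^ 2 * (x' ^ 2 + y' ^ 2 + z' ^ 2 - (y ^ 2 + 4 * z ^ 2)) = 0 := by
      linear_combination hK + (y' ^ 2 + z' ^ 2 - (y ^ 2 + 4 * z ^ 2)) * hx2
        + (x * x' - y * y' - z * z') * hxx'
    have := (mul_eq_zero.mp this).resolve_left (pow_ne_zero 2 hx)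
    linarith
  have hyzAcc : y * y'' + z * z'' = (y ^ 2 + 4 * z ^ 2) * (2 * x ^ 2 - 1) := by
    rw [hODEy, hODEz, hx2]; ring
  rw [← hxx', div_eq_iff (pow_ne_zero 2 hx)]
  linear_combination (-x) * hspeed - x * hyzAcc

/-- **Second-order equation for `x = √(1 − y² − z²)`.**
If `y, z` solve the EGJ system on an interval `I ∋ 0` with the EGJ initial data and
`y² + z² < 1` on `I`, then `x = √(1 − y² − z²)` is twice differentiable on `I` and
satisfies `x'' = −2(y² + 4z²)·x` on `I`. -/
theorem egj_x_second_order_ode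
    (a : ℝ) (I : Set ℝ) (hI : I.OrdConnected) (h0 : (0 : ℝ) ∈ I)
    (y z y' z' y'' z'' : ℝ → ℝ)
    (hy : ∀ s ∈ I, HasDerivAt y (y' s) s)
    (hy' : ∀ s ∈ I, HasDerivAt y' (y'' s) s)
    (hz : ∀ s ∈ I, HasDerivAt z (z' s) s)
    (hz' : ∀ s ∈ I, HasDerivAt z' (z'' s) s)
    (hODEy : ∀ s ∈ I, y'' s = (1 - 2 * (y s) ^ 2 - 8 * (z s) ^ 2) * y s)
    (hODEz : ∀ s ∈ I, z'' s = (4 - 2 * (y s) ^ 2 - 8 * (z s) ^ 2) * z s)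
    (hy0 : y 0 = 0) (hy'0 : y' 0 = 2 * a) (hz0 : z 0 = a) (hz'0 : z' 0 = 0)
    (hlt : ∀ s ∈ I, (y s) ^ 2 + (z s) ^ 2 < 1)
    (x : ℝ → ℝ) (hx : ∀ s, x s = Real.sqrt (1 - (y s) ^ 2 - (z s) ^ 2)) :
    ∃ x' x'' : ℝ → ℝ,
      (∀ s ∈ I, HasDerivAt x (x' s) s) ∧
      (∀ s ∈ I, HasDerivAt x' (x'' s) s) ∧
      ∀ s ∈ I, x'' s = -2 * ((y s) ^ 2 + 4 * (z s) ^ 2) * x s := by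
  have hxpos : ∀ s ∈ I, 0 < x s := fun s hs => by
    rw [hx s]; exact Real.sqrt_pos.mpr (by linarith [hlt s hs])
  have hx2 : ∀ s ∈ I, x s ^ 2 = 1 - y s ^ 2 - z s ^ 2 := fun s hs => by
    rw [hx s, Real.sq_sqrt (by linarith [hlt s hs])]
  have hK : ∀ s ∈ I, egjFirstIntegral y z y' z' s = 0 := fun s hs =>
    (hI.convex.eq_of_forall_hasDerivAt_zero (fun t ht => hasDerivAt_egjFirstIntegral (hy t ht)
      (hy' t ht) (hz t ht) (hz' t ht) (hODEy t ht) (hODEz t ht)) h0 hs).trans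
      (egjFirstIntegral_eq_zero_of_initial a hy0 hy'0 hz0 hz'0)
  set x' : ℝ → ℝ := fun s => -(y s * y' s + z s * z' s) / x s with hx'
  have hxx' : ∀ s ∈ I, x s * x' s = -(y s * y' s + z s * z' s) := fun s hs => by
    simp only [hx']; field_simp [(hxpos s hs).ne']
  have hdx : ∀ s ∈ I, HasDerivAt x (x' s) s := fun s hs => by
    simpa only [funext hx, hx', ← hx s] using
      hasDerivAt_sqrt_one_sub_sq_sub_sq (hy s hs) (hz s hs) (hlt s hs)
  refine ⟨x', fun s => -2 * (y s ^ 2 + 4 * z s ^ 2) * x s, hdx, fun s hs => ?_, fun _ _ => rfl⟩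
  exact ((((hy s hs).mul (hy' s hs)).add ((hz s hs).mul (hz' s hs))).neg.div (hdx s hs)
    (hxpos s hs).ne').congr_deriv (egj_x_second_deriv_eq (hxpos s hs).ne' (hx2 s hs) (hxx' s hs)
      (hODEy s hs) (hODEz s hs) (hK s hs))
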